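/- arXiv:1703.09251 — 4 statements merged into one kernel-verified Lean document; each statement's English description precedes it below -/
import Mathlib

section
/- For every integer k ≥ 1 and every j with 0 ≤ j ≤ k-1, the quantity a(k,j) = ((2k-1)(2k+1)/(2j+3)) * C(k+j, 2j+1) is an integer. -/
theorem a_kj_is_integer (k j : ℕ) (hk : 1 ≤ k) (hj : j ≤ k - 1) :
    ∃ m : ℤ, (((2 * k - 1) * (2 * k + 1) : ℚ) / (2 * j + 3)) *
      (Nat.choose (k + j) (2 * j + 1) : ℚ) = m := by
  refine ⟨8 * (j + 1) * (Nat.choose (k + j + 2) (2 * j + 3) : ℤ)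
      - (4 * k + 2 * j + 3) * (Nat.choose (k + j) (2 * j + 1) : ℤ), ?_⟩
  have h1 : ((k + j + 1) * Nat.choose (k + j) (2 * j + 1) : ℚ)
      = (Nat.choose (k + j + 1) (2 * j + 2) : ℚ) * (2 * j + 2) := by
    exact_mod_cast congrArg (Nat.cast : ℕ → ℚ)
      (Nat.add_one_mul_choose_eq (k + j) (2 * j + 1))
  have h2 : ((k + j + 2) * Nat.choose (k + j + 1) (2 * j + 2) : ℚ)
      = (Nat.choose (k + j + 2) (2 * j + 3) : ℚ) * (2 * j + 3) := by
    have := Nat.add_one_mul_choose_eq (k + j + 1) (2 * j + 2)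
    exact_mod_cast congrArg (Nat.cast : ℕ → ℚ) this
  have h3 : ((2 : ℚ) * j + 3) ≠ 0 := by positivity
  rw [div_mul_eq_mul_div, div_eq_iff h3]
  push_cast
  linear_combination (4 * ((k : ℚ) + j + 2)) * h1 + (4 * (2 * (j : ℚ) + 2)) * h2
end

section
/- For every integer k ≥ 0 and every j with 0 ≤ j ≤ k, the quantity b(k,j) = ((2k+1)/(2j+1)) * C(k+j, 2j) is an integer. -/
/-! The relation `(2j+1) C(k+j, 2j+1) = (k-j) C(k+j, 2j)` turns
`(2k+1) C(k+j, 2j) = (2j+1) C(k+j, 2j) + 2 (k-j) C(k+j, 2j)` into a multiple of `2j+1`,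
with cofactor `C(k+j, 2j) + 2 C(k+j, 2j+1)`. -/

theorem Nat.two_mul_add_one_mul_choose_eq (k j : ℕ) :
    (2 * k + 1) * (k + j).choose (2 * j) =
      (2 * j + 1) * ((k + j).choose (2 * j) + 2 * (k + j).choose (2 * j + 1)) := by
  rcases le_or_gt j k with hjk | hkj
  · obtain ⟨d, rfl⟩ := Nat.exists_eq_add_of_le hjk
    have h := Nat.choose_succ_right_eq (j + d + j) (2 * j)
    rw [show j + d + j - 2 * j = d by omega] at h
    linear_combination 2 * h.symm
  · simp [Nat.choose_eq_zero_of_lt (by omega : k + j < 2 * j),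
      Nat.choose_eq_zero_of_lt (by omega : k + j < 2 * j + 1)]

theorem b_kj_is_integer_general (k j : ℕ) :
    ∃ m : ℤ, (((2 * k + 1) : ℚ) / (2 * j + 1)) * (Nat.choose (k + j) (2 * j) : ℚ) = m := by
  refine ⟨(k + j).choose (2 * j) + 2 * (k + j).choose (2 * j + 1), ?_⟩
  have h := congrArg (Nat.cast : ℕ → ℚ) (Nat.two_mul_add_one_mul_choose_eq k j)
  push_cast at h ⊢
  rw [div_mul_eq_mul_div, div_eq_iff (by positivity), h]
  ring

theorem b_kj_is_integer (k j : ℕ) (hj : j ≤ k) :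
    ∃ m : ℤ, (((2 * k + 1) : ℚ) / (2 * j + 1)) * (Nat.choose (k + j) (2 * j) : ℚ) = m :=
  b_kj_is_integer_general k j
end

section
/- For every integer m ≥ 0, U_m(x) = Σ_{k=0}^{m} P_k(x) · P_{m-k}(x) as polynomials, where P_k denotes the k-th Legendre polynomial. -/
open Polynomial Finset

/-- The `n`-th Legendre polynomial, via the Rodrigues formula. -/
noncomputable def legendre (n : ℕ) : ℝ[X] :=
  Polynomial.C ((2 ^ n * n.factorial : ℝ)⁻¹) * Polynomial.derivative^[n] ((X ^ 2 - 1) ^ n)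

/-!
From the Rodrigues formula one gets `(n+1) P_{n+1} = (n+1) x P_n + (x²-1) P_n'` and
`P_{n+1}' = x P_n' + (n+1) P_n`, hence Bonnet's recurrence
`(n+2) P_{n+2} = (2n+3) x P_{n+1} - (n+1) P_n`. Read on coefficients, Bonnet's recurrence says that
`G(t) = ∑ P_n t^n` solves `(1 - 2xt + t²) G' = (x - t) G`, so `(1 - 2xt + t²) G²` has derivative zero
and equals its constant term `1`. The Chebyshev recurrence gives `(1 - 2xt + t²) ∑ U_m t^m = 1`,
so `G² = ∑ U_m t^m`, and the theorem compares the coefficients of `t^m`.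
-/

open scoped PowerSeries

lemma two_mul_natCast_add_one {S : Type*} [Semiring S] (n : ℕ) :
    2 * ((n : S) + 1) = ((2 * (n + 1) : ℕ) : S) := by
  norm_cast

section Rodrigues

variable {R : Type*} [CommRing R]

lemma derivative_X_sq_sub_one_pow_succ (n : ℕ) :
    derivative (((X : R[X]) ^ 2 - 1) ^ (n + 1)) =
      2 * ((n : R[X]) + 1) * ((X ^ 2 - 1) ^ n * X) := by
  rw [derivative_pow, derivative_sub, derivative_X_sq, derivative_one, C_ofNat]
  simp only [map_natCast, Nat.add_sub_cancel]
  push_cast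
  ring

lemma iterate_derivative_mul_X_sq_sub_one (n : ℕ) (p : R[X]) :
    derivative^[n + 1] (p * (X ^ 2 - 1)) =
      derivative^[n + 1] p * (X ^ 2 - 1) + 2 * ((n : R[X]) + 1) * X * derivative^[n] p +
        ((n : R[X]) + 1) * (n : R[X]) * derivative^[n - 1] p := by
  rw [show p * (X ^ 2 - 1) = p * X * X - p by ring, iterate_derivative_sub,
    iterate_derivative_mul_X, iterate_derivative_mul_X, Nat.add_sub_cancel,
    iterate_derivative_mul_X]
  simp only [nsmul_eq_mul]
  push_cast
  ring

variable (R) in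
noncomputable def rodrigues (n : ℕ) : R[X] := derivative^[n] ((X ^ 2 - 1) ^ n)

lemma rodrigues_succ (n : ℕ) :
    rodrigues R (n + 1) = 2 * ((n : R[X]) + 1) * X * rodrigues R n +
      2 * (X ^ 2 - 1) * derivative (rodrigues R n) := by
  -- Expand `D^{n+1} (x²-1)^{n+1}` in two ways and eliminate the common term `D^{n-1} (x²-1)^n`.
  have via_derivative : rodrigues R (n + 1) = 2 * ((n : R[X]) + 1) *
      (X * rodrigues R n + (n : R[X]) * derivative^[n - 1] (((X : R[X]) ^ 2 - 1) ^ n)) := by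
    unfold rodrigues
    rw [Function.iterate_succ_apply, derivative_X_sq_sub_one_pow_succ, two_mul_natCast_add_one,
      iterate_derivative_natCast_mul, iterate_derivative_mul_X, nsmul_eq_mul]
    push_cast
    ring
  have via_product : rodrigues R (n + 1) = (X ^ 2 - 1) * derivative (rodrigues R n) +
      2 * ((n : R[X]) + 1) * X * rodrigues R n +
        ((n : R[X]) + 1) * (n : R[X]) * derivative^[n - 1] (((X : R[X]) ^ 2 - 1) ^ n) := by
    unfold rodrigues
    rw [pow_succ, iterate_derivative_mul_X_sq_sub_one, ← Function.iterate_succ_apply' derivative]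
    ring
  linear_combination 2 * via_product - via_derivative

lemma derivative_rodrigues_succ (n : ℕ) :
    derivative (rodrigues R (n + 1)) = 2 * ((n : R[X]) + 1) *
      (X * derivative (rodrigues R n) + ((n : R[X]) + 1) * rodrigues R n) := by
  unfold rodrigues
  rw [← Function.iterate_succ_apply' derivative, Function.iterate_succ_apply,
    derivative_X_sq_sub_one_pow_succ, two_mul_natCast_add_one, iterate_derivative_natCast_mul,
    iterate_derivative_mul_X, nsmul_eq_mul, Nat.add_sub_cancel, Function.iterate_succ_apply']
  push_cast
  ring

end Rodrigues

lemma legendre_eq_C_mul_rodrigues (n : ℕ) :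
    legendre n = C ((2 ^ n * n.factorial : ℝ)⁻¹) * rodrigues ℝ n :=
  rfl

lemma two_mul_succ_mul_legendre_succ (n : ℕ) :
    2 * ((n : ℝ[X]) + 1) * legendre (n + 1) =
      C ((2 ^ n * n.factorial : ℝ)⁻¹) * rodrigues ℝ (n + 1) := by
  rw [legendre_eq_C_mul_rodrigues, ← mul_assoc]
  congr 1
  rw [show 2 * ((n : ℝ[X]) + 1) = C (2 * ((n : ℝ) + 1)) by
      simp only [map_mul, map_add, map_natCast, map_one, C_ofNat],
    ← C_mul, Nat.factorial_succ]
  congr 1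
  field_simp
  push_cast
  ring

lemma succ_mul_legendre_succ (n : ℕ) :
    ((n : ℝ[X]) + 1) * legendre (n + 1) =
      ((n : ℝ[X]) + 1) * X * legendre n + (X ^ 2 - 1) * derivative (legendre n) := by
  have h := congrArg (C ((2 ^ n * n.factorial : ℝ)⁻¹) * ·) (rodrigues_succ (R := ℝ) n)
  rw [← two_mul_succ_mul_legendre_succ] at h
  rw [legendre_eq_C_mul_rodrigues n, derivative_C_mul]
  apply mul_left_cancel₀ (two_ne_zero : (2 : ℝ[X]) ≠ 0)
  linear_combination h

lemma derivative_legendre_succ (n : ℕ) :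
    derivative (legendre (n + 1)) = X * derivative (legendre n) + ((n : ℝ[X]) + 1) * legendre n := by
  have h := congrArg derivative (two_mul_succ_mul_legendre_succ n)
  rw [derivative_C_mul, derivative_rodrigues_succ, two_mul_natCast_add_one,
    derivative_natCast_mul, ← two_mul_natCast_add_one] at h
  have hne : 2 * ((n : ℝ[X]) + 1) ≠ 0 := by
    rw [two_mul_natCast_add_one]
    exact Nat.cast_ne_zero.mpr (by omega)
  apply mul_left_cancel₀ hne
  rw [legendre_eq_C_mul_rodrigues n, derivative_C_mul]
  linear_combination h

lemma legendre_zero : legendre 0 = 1 := by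
  simp [legendre]

lemma legendre_one : legendre 1 = X := by
  simpa [legendre_zero] using succ_mul_legendre_succ 0

lemma legendre_add_two (n : ℕ) :
    ((n : ℝ[X]) + 2) * legendre (n + 2) =
      (2 * (n : ℝ[X]) + 3) * X * legendre (n + 1) - ((n : ℝ[X]) + 1) * legendre n := by
  have h1 := succ_mul_legendre_succ (n + 1)
  push_cast at h1
  linear_combination h1 + (X ^ 2 - 1) * derivative_legendre_succ n - X * succ_mul_legendre_succ n

section GeneratingFunction

variable {R : Type*} [CommRing R]

noncomputable def chebyshevDenom (a : R) : R⟦X⟧ :=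
  1 - PowerSeries.C (2 * a) * PowerSeries.X + PowerSeries.X ^ 2

lemma coeff_zero_chebyshevDenom_mul (a : R) (f : R⟦X⟧) :
    PowerSeries.coeff 0 (chebyshevDenom a * f) = PowerSeries.coeff 0 f := by
  simp [chebyshevDenom, sub_mul, add_mul, mul_assoc]

lemma coeff_one_chebyshevDenom_mul (a : R) (f : R⟦X⟧) :
    PowerSeries.coeff 1 (chebyshevDenom a * f) =
      PowerSeries.coeff 1 f - 2 * a * PowerSeries.coeff 0 f := by
  simp [chebyshevDenom, sub_mul, add_mul, mul_assoc, PowerSeries.coeff_X_pow_mul']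

lemma coeff_add_two_chebyshevDenom_mul (a : R) (f : R⟦X⟧) (n : ℕ) :
    PowerSeries.coeff (n + 2) (chebyshevDenom a * f) = PowerSeries.coeff (n + 2) f -
      2 * a * PowerSeries.coeff (n + 1) f + PowerSeries.coeff n f := by
  simp [chebyshevDenom, sub_mul, add_mul, mul_assoc, PowerSeries.coeff_X_pow_mul']

lemma derivative_chebyshevDenom (a : R) :
    d⁄dX R (chebyshevDenom a) = 2 * PowerSeries.X - PowerSeries.C (2 * a) := by
  simp only [chebyshevDenom, map_add, map_sub, Derivation.map_one_eq_zero, Derivation.leibniz,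
    PowerSeries.derivative_X, PowerSeries.derivative_C, Derivation.leibniz_pow, smul_eq_mul,
    nsmul_eq_mul, Nat.cast_ofNat, Nat.add_one_sub_one, pow_one]
  ring

lemma chebyshevDenom_mul_mk_chebyshevU :
    chebyshevDenom (X : R[X]) * PowerSeries.mk (fun n ↦ Chebyshev.U R n) = 1 := by
  ext (_ | _ | n)
  · simp [coeff_zero_chebyshevDenom_mul]
  · simp [coeff_one_chebyshevDenom_mul]
  · rw [coeff_add_two_chebyshevDenom_mul]
    simp only [PowerSeries.coeff_mk, PowerSeries.coeff_one]
    push_cast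
    rw [Chebyshev.U_add_two]
    simp

lemma chebyshevDenom_mul_derivative_mk (x : R) (p : ℕ → R) (h₀ : p 0 = 1) (h₁ : p 1 = x)
    (hp : ∀ n : ℕ, ((n : R) + 2) * p (n + 2) = (2 * n + 3) * x * p (n + 1) - (n + 1) * p n) :
    chebyshevDenom x * d⁄dX R (PowerSeries.mk p) =
      (PowerSeries.C x - PowerSeries.X) * PowerSeries.mk p := by
  ext (_ | _ | n)
  · simp [coeff_zero_chebyshevDenom_mul, PowerSeries.coeff_derivative, h₀, h₁]
  · simp only [zero_add, coeff_one_chebyshevDenom_mul, PowerSeries.coeff_derivative,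
      PowerSeries.coeff_mk, Nat.cast_one, Nat.cast_zero, mul_one, sub_mul, map_sub,
      PowerSeries.coeff_C_mul, PowerSeries.coeff_succ_X_mul]
    linear_combination hp 0
  · rw [coeff_add_two_chebyshevDenom_mul]
    simp only [PowerSeries.coeff_derivative, PowerSeries.coeff_mk, Nat.cast_add, Nat.cast_ofNat,
      Nat.cast_one, sub_mul, map_sub, PowerSeries.coeff_C_mul, PowerSeries.coeff_succ_X_mul]
    have h := hp (n + 1)
    push_cast at h
    linear_combination h

-- Kept over a general `R`: for `R = ℝ[X]`, `Derivation.leibniz` runs into the non-defeq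
-- instance `PowerSeries.algebraPolynomial : Algebra ℝ[X] ℝ[X]⟦X⟧`.
lemma chebyshevDenom_mul_mk_sq [IsAddTorsionFree R] (x : R) (p : ℕ → R) (h₀ : p 0 = 1)
    (h₁ : p 1 = x)
    (hp : ∀ n : ℕ, ((n : R) + 2) * p (n + 2) = (2 * n + 3) * x * p (n + 1) - (n + 1) * p n) :
    chebyshevDenom x * PowerSeries.mk p ^ 2 = 1 := by
  apply PowerSeries.derivative.ext
  · rw [Derivation.leibniz, derivative_chebyshevDenom, PowerSeries.derivative_pow,
      Derivation.map_one_eq_zero, smul_eq_mul, smul_eq_mul, map_mul, map_ofNat]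
    simp only [Nat.cast_ofNat, Nat.add_one_sub_one, pow_one]
    linear_combination 2 * PowerSeries.mk p * chebyshevDenom_mul_derivative_mk x p h₀ h₁ hp
  · simp [chebyshevDenom, h₀]

end GeneratingFunction

lemma mk_legendre_sq : PowerSeries.mk legendre ^ 2 = PowerSeries.mk (fun n ↦ Chebyshev.U ℝ n) := by
  calc PowerSeries.mk legendre ^ 2
      = PowerSeries.mk legendre ^ 2 *
          (chebyshevDenom X * PowerSeries.mk (fun n ↦ Chebyshev.U ℝ n)) := by
        rw [chebyshevDenom_mul_mk_chebyshevU, mul_one]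
    _ = PowerSeries.mk (fun n ↦ Chebyshev.U ℝ n) := by
        rw [← mul_assoc, mul_comm _ (chebyshevDenom X),
          chebyshevDenom_mul_mk_sq X legendre legendre_zero legendre_one legendre_add_two, one_mul]

theorem chebyshevU_eq_legendre_convolution (m : ℕ) :
    Polynomial.Chebyshev.U ℝ m = ∑ k ∈ Finset.range (m + 1), legendre k * legendre (m - k) := by
  have h := congrArg (PowerSeries.coeff m) mk_legendre_sq
  rw [PowerSeries.coeff_mk, sq, PowerSeries.coeff_mul,
    Finset.Nat.sum_antidiagonal_eq_sum_range_succ_mk] at h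
  simpa using h.symm
end

section
/- For every integer n ≥ 1, Σ_{r=0}^{n} (−1)^{n−r} 2^{2r−1} C(n+r+λ−1, r) C(n+r, 2r) / C(n+r, r) = (1/2) · C(2n+2λ−1, 2n−1) / C(n+λ−1, n−1), as an identity of polynomials (or rational functions) in λ. -/
open Finset

/-- The generalized binomial coefficient `C(a, b) = a(a-1)⋯(a-b+1)/b!` for real `a`. -/
noncomputable def gbinom (a : ℝ) (b : ℕ) : ℝ :=
  (∏ i ∈ Finset.range b, (a - i)) / (b.factorial : ℝ)

/-!
With `x = n - 1/2`, the weight `4^r C(n+r, 2r) / C(n+r, r)` equals `C(x, n-r) / C(x, n)` (by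
`C(n, r) C(x, n) = C(x, n-r) C(r-1/2, r)` and `4^r C(r-1/2, r) = C(2r, r)`), and
`(-1)^(n-r) C(n+r+λ-1, r) = (-1)^n C(-n-λ, r)`. The sum thus becomes a Chu–Vandermonde
convolution, equal to `C(n+λ-1/2, n) / (2 C(n-1/2, n))` after upper negation. The Legendre
duplication formula for falling factorials, which splits `C(2n+2λ-1, 2n-1)` into its odd and
even factors, turns this into the right-hand side.
-/

open Polynomial

theorem Ring.choose_neg_eq_neg_one_pow_mul {R : Type*} [Ring R] [BinomialRing R] (a : R)
    (k : ℕ) : Ring.choose (-a) k = (-1) ^ k * Ring.choose (a + k - 1) k := by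
  rw [Ring.choose_neg, Units.smul_def, zsmul_eq_mul, Int.cast_negOnePow_natCast]

section Field

variable {K : Type*} [Field K] [CharZero K]

theorem Ring.choose_eq_descPochhammer_eval_div (a : K) (n : ℕ) :
    Ring.choose a n = (descPochhammer K n).eval a / n.factorial := by
  rw [Ring.choose_eq_smul, ← descPochhammer_map (Int.castRingHom K), eval_map, smul_eq_mul,
    inv_mul_eq_div, ← algebraMap_int_eq, ← aeval_def, aeval_eq_smeval]

theorem descPochhammer_two_mul_eval_two_mul (y : K) (k : ℕ) :
    (descPochhammer K (2 * k)).eval (2 * y) =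
      4 ^ k * (descPochhammer K k).eval y * (descPochhammer K k).eval (y - 1 / 2) := by
  induction k with
  | zero => simp
  | succ k ih =>
    rw [show 2 * (k + 1) = 2 * k + 1 + 1 by ring, descPochhammer_succ_eval,
      descPochhammer_succ_eval, ih, descPochhammer_succ_eval, descPochhammer_succ_eval]
    push_cast
    ring

theorem descPochhammer_two_mul_add_one_eval_two_mul (y : K) (k : ℕ) :
    (descPochhammer K (2 * k + 1)).eval (2 * y) =
      2 ^ (2 * k + 1) * (descPochhammer K (k + 1)).eval y *
        (descPochhammer K k).eval (y - 1 / 2) := by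
  rw [descPochhammer_succ_eval, descPochhammer_two_mul_eval_two_mul, descPochhammer_succ_eval,
    pow_succ, pow_mul]
  push_cast
  ring

theorem Ring.choose_sub_half_mul_four_pow (k : ℕ) :
    Ring.choose ((k : K) - 1 / 2) k * 4 ^ k = k.centralBinom := by
  have h := descPochhammer_two_mul_eval_two_mul (k : K) k
  rw [show 2 * (k : K) = ((2 * k : ℕ) : K) by push_cast; ring,
    descPochhammer_eval_eq_descFactorial, descPochhammer_eval_eq_descFactorial,
    Nat.descFactorial_self, Nat.descFactorial_self] at h
  have hk : (k.factorial : K) ≠ 0 := Nat.cast_ne_zero.2 k.factorial_ne_zero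
  rw [Ring.choose_eq_descPochhammer_eval_div, Nat.centralBinom_eq_two_mul_choose,
    Nat.cast_choose K (by omega : k ≤ 2 * k), h, show 2 * k - k = k by omega]
  field_simp

theorem Ring.choose_sub_half_ne_zero (k : ℕ) : Ring.choose ((k : K) - 1 / 2) k ≠ 0 := by
  intro h
  have hk := Ring.choose_sub_half_mul_four_pow (K := K) k
  rw [h, zero_mul, eq_comm, Nat.cast_eq_zero] at hk
  exact (Nat.centralBinom_pos k).ne' hk

theorem Ring.choose_two_mul_add_one_mul_choose (y : K) (k : ℕ) :
    Ring.choose (2 * y) (2 * k + 1) * Ring.choose ((k : K) + 1 / 2) (k + 1) =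
      Ring.choose y (k + 1) * Ring.choose (y - 1 / 2) k := by
  have hy := descPochhammer_two_mul_add_one_eval_two_mul y k
  have hk := descPochhammer_two_mul_add_one_eval_two_mul ((k : K) + 1 / 2) k
  rw [show 2 * ((k : K) + 1 / 2) = ((2 * k + 1 : ℕ) : K) by push_cast; ring,
    show (k : K) + 1 / 2 - 1 / 2 = k by ring, descPochhammer_eval_eq_descFactorial,
    descPochhammer_eval_eq_descFactorial, Nat.descFactorial_self, Nat.descFactorial_self] at hk
  have hne : (descPochhammer K (k + 1)).eval ((k : K) + 1 / 2) ≠ 0 := by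
    intro h0
    rw [h0, mul_zero, zero_mul, Nat.cast_eq_zero] at hk
    exact Nat.factorial_ne_zero _ hk
  have hkf : (k.factorial : K) ≠ 0 := Nat.cast_ne_zero.2 k.factorial_ne_zero
  simp only [Ring.choose_eq_descPochhammer_eval_div]
  rw [hy, hk, Nat.factorial_succ]
  generalize (descPochhammer K (k + 1)).eval ((k : K) + 1 / 2) = D at hne ⊢
  push_cast
  field_simp

theorem four_pow_mul_choose_div_choose {n r : ℕ} (hr : r ≤ n) :
    (4 : K) ^ r * (n + r).choose (2 * r) / (n + r).choose r =
      Ring.choose ((n : K) - 1 / 2) (n - r) / Ring.choose ((n : K) - 1 / 2) n := by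
  have hnat : (n + r).choose (2 * r) * (2 * r).choose r = (n + r).choose r * n.choose r := by
    rw [Nat.choose_mul (by omega)]
    congr 2 <;> omega
  have hsplit := Ring.choose_smul_choose ((n : K) - 1 / 2) (Nat.sub_le n r)
  rw [Nat.choose_symm hr, Nat.cast_sub hr, Nat.sub_sub_self hr, nsmul_eq_mul,
    show (n : K) - 1 / 2 - (n - r) = r - 1 / 2 by ring] at hsplit
  have hcentral := Ring.choose_sub_half_mul_four_pow (K := K) r
  rw [Nat.centralBinom_eq_two_mul_choose] at hcentral
  have hcross : ((n + r).choose (2 * r) : K) * (Ring.choose ((r : K) - 1 / 2) r * 4 ^ r) =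
      (n + r).choose r * n.choose r := by
    rw [hcentral]
    exact_mod_cast hnat
  have hB : ((n + r).choose r : K) ≠ 0 := Nat.cast_ne_zero.2 (Nat.choose_pos (by omega)).ne'
  rw [div_eq_div_iff hB (Ring.choose_sub_half_ne_zero n)]
  apply mul_left_cancel₀ (Ring.choose_sub_half_ne_zero (K := K) r)
  linear_combination Ring.choose ((n : K) - 1 / 2) n * hcross + ((n + r).choose r : K) * hsplit

theorem sum_neg_one_pow_mul_choose_mul_choose_div_choose (n : ℕ) (l : K) :
    ∑ r ∈ range (n + 1),
        (-1 : K) ^ (n - r) * 2 ^ (2 * r - 1 : ℤ) * Ring.choose ((n : K) + r + l - 1) r *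
          ((n + r).choose (2 * r) : K) / ((n + r).choose r : K) =
      1 / 2 * Ring.choose ((n : K) + l - 1 / 2) n / Ring.choose ((n : K) - 1 / 2) n := by
  have hterm : ∀ r ∈ range (n + 1),
      (-1 : K) ^ (n - r) * 2 ^ (2 * r - 1 : ℤ) * Ring.choose ((n : K) + r + l - 1) r *
          ((n + r).choose (2 * r) : K) / ((n + r).choose r : K) =
        (-1) ^ n / (2 * Ring.choose ((n : K) - 1 / 2) n) *
          (Ring.choose (-(n + l)) r * Ring.choose ((n : K) - 1 / 2) (n - r)) := by
    intro r hr
    have hrn : r ≤ n := Nat.lt_succ_iff.mp (mem_range.mp hr)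
    have hsign : (-1 : K) ^ (n - r) = (-1) ^ n * (-1) ^ r := by
      rw [← pow_add, show n + r = n - r + 2 * r by omega, pow_add, pow_mul]
      norm_num
    calc _ = (-1) ^ (n - r) / 2 * Ring.choose ((n : K) + r + l - 1) r *
          ((4 : K) ^ r * (n + r).choose (2 * r) / (n + r).choose r) := by
            rw [zpow_sub₀ two_ne_zero, zpow_one, zpow_mul]
            norm_num
            ring
      _ = _ := by
            rw [four_pow_mul_choose_div_choose hrn, Ring.choose_neg_eq_neg_one_pow_mul, hsign,
              show (n : K) + l + r - 1 = n + r + l - 1 by ring]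
            ring
  rw [sum_congr rfl hterm, ← mul_sum, ← Nat.sum_antidiagonal_eq_sum_range_succ_mk
      (fun ij => Ring.choose (-(n + l)) ij.1 * Ring.choose ((n : K) - 1 / 2) ij.2),
    ← Ring.add_choose_eq _ (Commute.all _ _),
    show -((n : K) + l) + (n - 1 / 2) = -(l + 1 / 2) by ring, Ring.choose_neg_eq_neg_one_pow_mul,
    show l + 1 / 2 + n - 1 = (n : K) + l - 1 / 2 by ring]
  have hsq : (-1 : K) ^ n * (-1) ^ n = 1 := by rw [← mul_pow]; norm_num
  linear_combination
    Ring.choose ((n : K) + l - 1 / 2) n / (2 * Ring.choose ((n : K) - 1 / 2) n) * hsq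

end Field

theorem gbinom_eq_choose (a : ℝ) (b : ℕ) : gbinom a b = Ring.choose a b := by
  rw [gbinom, Ring.choose_eq_descPochhammer_eval_div, descPochhammer_eval_eq_prod_range]

theorem combinatorial_identity_even (n : ℕ) (hn : 1 ≤ n) (l : ℝ) :
    (∑ r ∈ Finset.range (n + 1),
        (-1 : ℝ) ^ (n - r) * 2 ^ (2 * r - 1 : ℤ) * gbinom ((n : ℝ) + r + l - 1) r *
          ((n + r).choose (2 * r) : ℝ) / ((n + r).choose r : ℝ)) *
      gbinom ((n : ℝ) + l - 1) (n - 1) =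
    (1 / 2) * gbinom (2 * (n : ℝ) + 2 * l - 1) (2 * n - 1) := by
  obtain ⟨k, rfl⟩ : ∃ k, n = k + 1 := ⟨n - 1, by omega⟩
  simp only [gbinom_eq_choose]
  rw [sum_neg_one_pow_mul_choose_mul_choose_div_choose, Nat.add_sub_cancel,
    show 2 * (k + 1) - 1 = 2 * k + 1 by omega]
  have hdup := Ring.choose_two_mul_add_one_mul_choose (((k + 1 : ℕ) : ℝ) + l - 1 / 2) k
  rw [show 2 * (((k + 1 : ℕ) : ℝ) + l - 1 / 2) = 2 * ((k + 1 : ℕ) : ℝ) + 2 * l - 1 by ring,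
    show ((k + 1 : ℕ) : ℝ) + l - 1 / 2 - 1 / 2 = ((k + 1 : ℕ) : ℝ) + l - 1 by ring,
    show (k : ℝ) + 1 / 2 = ((k + 1 : ℕ) : ℝ) - 1 / 2 by push_cast; ring] at hdup
  rw [div_mul_eq_mul_div, div_eq_iff (Ring.choose_sub_half_ne_zero (k + 1))]
  linear_combination -1 / 2 * hdup
end
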